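/- arXiv:1007.0695 — 2 statements merged into one kernel-verified Lean document; each statement's English description precedes it below -/
import Mathlib

section
/- Let v₁ and v₂ be vectors in ℤ² with det(v₁, v₂) = ±1. Then a vector v₃ ∈ ℤ² satisfies det(v₁, v₃) = ±1 and det(v₂, v₃) = ±1 if and only if v₃ is one of the four vectors v₁ + v₂, −(v₁ + v₂), v₁ − v₂, −(v₁ − v₂). -/
/-- The determinant `det(u, w) = u₁w₂ − u₂w₁` of two vectors in `ℤ²`. -/
def det2 (u w : ℤ × ℤ) : ℤ := u.1 * w.2 - u.2 * w.1

lemma det2_key (x1 x2 y1 y2 z1 z2 d p q : ℤ) (hdd : d * d = 1)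
    (hd : x1 * y2 - x2 * y1 = d) (hp : x1 * z2 - x2 * z1 = p)
    (hq : y1 * z2 - y2 * z1 = q) :
    z1 = d * (p * y1 - q * x1) ∧ z2 = d * (p * y2 - q * x2) := by
  constructor
  · linear_combination (-d * z1) * hd + (d * y1) * hp + (-d * x1) * hq + (-z1) * hdd
  · linear_combination (-d * z2) * hd + (d * y2) * hp + (-d * x2) * hq + (-z2) * hdd

theorem det_pm_one_characterization (v₁ v₂ : ℤ × ℤ)
    (h : det2 v₁ v₂ = 1 ∨ det2 v₁ v₂ = -1) (v₃ : ℤ × ℤ) :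
    ((det2 v₁ v₃ = 1 ∨ det2 v₁ v₃ = -1) ∧ (det2 v₂ v₃ = 1 ∨ det2 v₂ v₃ = -1)) ↔
      (v₃ = v₁ + v₂ ∨ v₃ = -(v₁ + v₂) ∨ v₃ = v₁ - v₂ ∨ v₃ = -(v₁ - v₂)) := by
  obtain ⟨x1, x2⟩ := v₁
  obtain ⟨y1, y2⟩ := v₂
  obtain ⟨z1, z2⟩ := v₃
  simp only [det2, Prod.mk_add_mk, Prod.mk_sub_mk, Prod.neg_mk, Prod.mk.injEq] at *
  constructor
  · rintro ⟨hp, hq⟩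
    rcases h with hd | hd <;> rcases hp with hp | hp <;> rcases hq with hq | hq <;>
      obtain ⟨hz1, hz2⟩ := det2_key x1 x2 y1 y2 z1 z2 _ _ _ (by norm_num) hd hp hq <;>
      omega
  · rcases h with hd | hd <;>
      rintro (⟨rfl, rfl⟩ | ⟨rfl, rfl⟩ | ⟨rfl, rfl⟩ | ⟨rfl, rfl⟩) <;>
      constructor <;>
      first
      | (left; linear_combination hd)
      | (right; linear_combination hd)
      | (left; linear_combination -hd)
      | (right; linear_combination -hd)
end

section
/- Let a/b and c/d be two Farey-neighbors, given in reduced form. Then a Farey vertex x forms a Farey triangle together with a/b and c/d if and only if x = (a+c)/(b+d) or x = (a−c)/(b−d); in particular, every pair of Farey-neighbors is contained in exactly two Farey triangles. -/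
/-- A Farey vertex is an element of `ℚ ∪ {∞}`; `none` represents `∞`. -/
abbrev FareyVertex := Option ℚ

/-- The numerator of the reduced form `a/b` (with `b ≥ 0`) of a Farey vertex; `∞ = 1/0`. -/
def fnum : FareyVertex → ℤ
  | none => 1
  | some r => r.num

/-- The denominator of the reduced form `a/b` (with `b ≥ 0`) of a Farey vertex; `∞ = 1/0`. -/
def fden : FareyVertex → ℤ
  | none => 0
  | some r => (r.den : ℤ)

/-- Two Farey vertices with reduced forms `a/b` and `c/d` are Farey-neighbors if `|ad - bc| = 1`. -/
def FareyNeighbor (x y : FareyVertex) : Prop :=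
  |fnum x * fden y - fden x * fnum y| = 1

/-- A Farey triangle: a set of three distinct pairwise Farey-neighbor Farey vertices. -/
@[ext]
structure FareyTriangle where
  verts : Finset FareyVertex
  card_eq : verts.card = 3
  neighbors : ∀ x ∈ verts, ∀ y ∈ verts, x ≠ y → FareyNeighbor x y

/-- The Farey tree `Σ`: vertices are the Farey triangles, two triangles being adjacent
if and only if their intersection has exactly two elements. -/
def fareyTree : SimpleGraph FareyTriangle where
  Adj T T' := (T.verts ∩ T'.verts).card = 2
  symm := by
    refine ⟨fun T T' h => ?_⟩
    rwa [Finset.inter_comm]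
  loopless := by
    refine ⟨fun T h => ?_⟩
    rw [Finset.inter_self, T.card_eq] at h
    omega

/-- The Farey vertex represented by the (not necessarily reduced) fraction `a/b`,
with the conventions `a/b = (-a)/(-b)` and `x/0 = ∞`. -/
def mkFarey (a b : ℤ) : FareyVertex :=
  if b = 0 then none else some ((a : ℚ) / (b : ℚ))

lemma neighbor_int_succ (i : ℤ) :
    FareyNeighbor (some (i : ℚ)) (some ((i + 1 : ℤ) : ℚ)) := by
  have hn : (((i + 1 : ℤ) : ℚ)).num = i + 1 := Rat.num_intCast _
  have hd : (((i + 1 : ℤ) : ℚ)).den = 1 := Rat.den_intCast _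
  simp only [FareyNeighbor, fnum, fden, hn, hd, Rat.num_intCast, Rat.den_intCast]
  simp

lemma neighbor_int_inf (i : ℤ) : FareyNeighbor (some (i : ℚ)) none := by
  simp [FareyNeighbor, fnum, fden]

lemma neighbor_symm {x y : FareyVertex} (h : FareyNeighbor x y) : FareyNeighbor y x := by
  unfold FareyNeighbor at h ⊢
  rw [← abs_neg]
  convert h using 2
  ring

/-- `△⁽ⁱ⁾`: the Farey triangle with vertices `i`, `i+1` and `∞`. -/
def stdTriangle (i : ℤ) : FareyTriangle where
  verts := {some (i : ℚ), some ((i + 1 : ℤ) : ℚ), none}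
  card_eq := by
    have h1 : (some (i : ℚ) : FareyVertex) ≠ some ((i + 1 : ℤ) : ℚ) := by
      simp only [ne_eq, Option.some.injEq]
      intro h
      have : (i : ℚ) = (i : ℚ) + 1 := by push_cast at h ⊢; linarith
      linarith
    simp [Finset.card_insert_of_notMem, h1]
  neighbors := by
    intro x hx y hy hxy
    have h1 := neighbor_int_succ i
    have h2 := neighbor_int_inf i
    have h3 := neighbor_int_inf (i + 1)
    simp only [Finset.mem_insert, Finset.mem_singleton] at hx hy
    rcases hx with rfl | rfl | rfl <;> rcases hy with rfl | rfl | rfl <;>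
      first
        | exact absurd rfl hxy
        | assumption
        | exact neighbor_symm h1
        | exact neighbor_symm h2
        | exact neighbor_symm h3

/-- `S p q` is the sum of the partial quotients in the expansion of `p/q`
as a regular continued fraction (for coprime `p ≥ 0`, `q ≥ 1`), with `S 0 1 = 0`. -/
def S (p q : ℕ) : ℕ :=
  if h : q = 0 then 0
  else p / q + S q (p % q)
termination_by q
decreasing_by exact Nat.mod_lt p (Nat.pos_of_ne_zero h)

/-!
A Farey vertex is the primitive vector `(fnum, fden)` of `ℤ²` up to sign, and two vertices are
neighbors when their vectors have determinant `±1`, i.e. form a basis of `ℤ²`. If `x` is a neighbor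
of both `u` and `w`, Cramer's rule in the basis `u, w` gives `±x = u ± w`; conversely `u ± w` is
unimodular against `u` and against `w`, hence primitive. The two candidates are distinct vertices
because `det (u + w, u - w) = -2 det (u, w) ≠ 0`, which yields exactly two triangles.
-/

lemma FareyNeighbor.ne {x y : FareyVertex} (h : FareyNeighbor x y) : x ≠ y := by
  rintro rfl
  simp [FareyNeighbor, mul_comm] at h

lemma mkFarey_fnum_fden (x : FareyVertex) : mkFarey (fnum x) (fden x) = x := by
  cases x with
  | none => simp [mkFarey, fden]
  | some r => simp [mkFarey, fnum, fden, Rat.num_div_den]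

lemma mkFarey_mul_mul {k : ℤ} (hk : k ≠ 0) (a b : ℤ) : mkFarey (k * a) (k * b) = mkFarey a b := by
  have hk' : (k : ℚ) ≠ 0 := by exact_mod_cast hk
  simp only [mkFarey, mul_eq_zero, hk, false_or, Int.cast_mul, mul_div_mul_left _ _ hk']

lemma mkFarey_neg (a b : ℤ) : mkFarey (-a) (-b) = mkFarey a b := by
  simpa using mkFarey_mul_mul (k := -1) (by norm_num) a b

lemma mul_eq_mul_of_mkFarey_eq {a b c d : ℤ} (h : mkFarey a b = mkFarey c d) : a * d = b * c := by
  unfold mkFarey at h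
  split_ifs at h with hb hd₀ hd
  · simp [hb, hd₀]
  · have hb' : (b : ℚ) ≠ 0 := by exact_mod_cast hb
    have hd' : (d : ℚ) ≠ 0 := by exact_mod_cast hd
    rw [Option.some.injEq, div_eq_div_iff hb' hd'] at h
    exact_mod_cast h.trans (mul_comm _ _)

lemma fnum_fden_mkFarey_of_pos {a b : ℤ} (h : IsCoprime a b) (hb : 0 < b) :
    fnum (mkFarey a b) = a ∧ fden (mkFarey a b) = b := by
  have hcop : Nat.Coprime a.natAbs b.natAbs := Int.isCoprime_iff_gcd_eq_one.mp h
  simp only [mkFarey, if_neg hb.ne', fnum, fden]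
  exact ⟨Rat.num_div_eq_of_coprime hb hcop, Rat.den_div_eq_of_coprime hb hcop⟩

lemma fnum_fden_mkFarey {a b : ℤ} (h : IsCoprime a b) :
    (fnum (mkFarey a b) = a ∧ fden (mkFarey a b) = b) ∨
      (fnum (mkFarey a b) = -a ∧ fden (mkFarey a b) = -b) := by
  rcases lt_trichotomy b 0 with hb | rfl | hb
  · right
    rw [← mkFarey_neg]
    exact fnum_fden_mkFarey_of_pos h.neg_neg (neg_pos.mpr hb)
  · rcases Int.isUnit_iff.mp (isCoprime_zero_right.mp h) with rfl | rfl
    · left; simp [mkFarey, fnum, fden]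
    · right; simp [mkFarey, fnum, fden]
  · exact .inl (fnum_fden_mkFarey_of_pos h hb)

lemma fareyNeighbor_mkFarey {y : FareyVertex} {a b : ℤ} (h : |fnum y * b - fden y * a| = 1) :
    FareyNeighbor y (mkFarey a b) := by
  have hcop : IsCoprime a b := by
    rcases (abs_eq zero_le_one).mp h with h1 | h1
    · exact ⟨-fden y, fnum y, by linear_combination h1⟩
    · exact ⟨fden y, -fnum y, by linear_combination -h1⟩
  unfold FareyNeighbor
  rcases fnum_fden_mkFarey hcop with ⟨hp, hq⟩ | ⟨hp, hq⟩ <;> rw [hp, hq]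
  · exact h
  · rw [← abs_neg]; convert h using 2; ring

lemma mkFarey_eq_add_or_sub {a b c d p q : ℤ} (hac : |a * d - b * c| = 1)
    (hap : |a * q - b * p| = 1) (hcp : |c * q - d * p| = 1) :
    mkFarey p q = mkFarey (a + c) (b + d) ∨ mkFarey p q = mkFarey (a - c) (b - d) := by
  set ε := a * d - b * c
  set α := c * q - d * p
  set β := a * q - b * p
  have hε : ε ^ 2 = 1 := by rw [← sq_abs, hac, one_pow]
  have hα : α ^ 2 = 1 := by rw [← sq_abs, hcp, one_pow]
  have hk : -(α * ε) ≠ 0 := by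
    rw [neg_ne_zero]; exact mul_ne_zero (by rintro h; simp [h] at hα) (by rintro h; simp [h] at hε)
  -- Cramer's rule gives `ε • (p, q) = -α • (a, b) + β • (c, d)`; multiply by `-α ε = (-α ε)⁻¹`.
  have hp : -(α * ε) * p = a - α * β * c := by linear_combination a * hα
  have hq : -(α * ε) * q = b - α * β * d := by linear_combination b * hα
  have hs : |α * β| = 1 := by rw [abs_mul, hcp, hap, one_mul]
  rw [← mkFarey_mul_mul hk, hp, hq]
  rcases (abs_eq zero_le_one).mp hs with hs | hs <;> rw [hs]
  · right; congr 1 <;> ring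
  · left; congr 1 <;> ring

lemma mkFarey_add_ne_mkFarey_sub {a b c d : ℤ} (h : |a * d - b * c| = 1) :
    mkFarey (a + c) (b + d) ≠ mkFarey (a - c) (b - d) := by
  intro he
  have h2 : 2 * (a * d - b * c) = 0 := by linear_combination -mul_eq_mul_of_mkFarey_eq he
  rcases (abs_eq zero_le_one).mp h with h1 | h1 <;> omega

lemma fareyNeighbor_and_fareyNeighbor_iff {u w x : FareyVertex} (h : FareyNeighbor u w) :
    FareyNeighbor u x ∧ FareyNeighbor w x ↔
      x = mkFarey (fnum u + fnum w) (fden u + fden w) ∨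
        x = mkFarey (fnum u - fnum w) (fden u - fden w) := by
  have h' : |fnum u * fden w - fden u * fnum w| = 1 := h
  constructor
  · rintro ⟨hux, hwx⟩
    rw [← mkFarey_fnum_fden x]
    exact mkFarey_eq_add_or_sub h hux hwx
  · rintro (rfl | rfl)
    · exact ⟨fareyNeighbor_mkFarey (by convert h' using 2; ring),
        fareyNeighbor_mkFarey (by rw [← abs_neg]; convert h' using 2; ring)⟩
    · exact ⟨fareyNeighbor_mkFarey (by rw [← abs_neg]; convert h' using 2; ring),
        fareyNeighbor_mkFarey (by rw [← abs_neg]; convert h' using 2; ring)⟩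

lemma exists_fareyTriangle_iff {u w x : FareyVertex} :
    (∃ T : FareyTriangle, T.verts = {u, w, x}) ↔
      FareyNeighbor u w ∧ FareyNeighbor u x ∧ FareyNeighbor w x := by
  constructor
  · rintro ⟨T, hT⟩
    have hcard : ({u, w, x} : Finset FareyVertex).card = 3 := hT ▸ T.card_eq
    have hne : u ≠ w ∧ u ≠ x ∧ w ≠ x := by
      refine ⟨?_, ?_, ?_⟩ <;> rintro rfl <;> simp [Finset.card_insert_eq_ite] at hcard <;>
        split_ifs at hcard <;> omega
    have hmem : u ∈ T.verts ∧ w ∈ T.verts ∧ x ∈ T.verts := by simp [hT]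
    exact ⟨T.neighbors u hmem.1 w hmem.2.1 hne.1, T.neighbors u hmem.1 x hmem.2.2 hne.2.1,
      T.neighbors w hmem.2.1 x hmem.2.2 hne.2.2⟩
  · rintro ⟨huw, hux, hwx⟩
    refine ⟨⟨{u, w, x}, Finset.card_eq_three.mpr ⟨u, w, x, huw.ne, hux.ne, hwx.ne, rfl⟩, ?_⟩, rfl⟩
    intro y hy z hz hyz
    simp only [Finset.mem_insert, Finset.mem_singleton] at hy hz
    rcases hy with rfl | rfl | rfl <;> rcases hz with rfl | rfl | rfl <;>
      first | contradiction | assumption | exact neighbor_symm (by assumption)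

lemma FareyTriangle.exists_verts_eq (T : FareyTriangle) {u w : FareyVertex} (hu : u ∈ T.verts)
    (hw : w ∈ T.verts) (huw : u ≠ w) : ∃ x, T.verts = {u, w, x} := by
  have hw' : w ∈ T.verts.erase u := Finset.mem_erase.mpr ⟨huw.symm, hw⟩
  obtain ⟨x, hx⟩ : ∃ x, (T.verts.erase u).erase w = {x} := by
    rw [← Finset.card_eq_one, Finset.card_erase_of_mem hw', Finset.card_erase_of_mem hu, T.card_eq]
  exact ⟨x, by rw [← hx, Finset.insert_erase hw', Finset.insert_erase hu]⟩

lemma ncard_setOf_mem_verts_eq_two {u w x₁ x₂ : FareyVertex} (huw : u ≠ w)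
    (hx₁ : x₁ ∉ ({u, w, x₂} : Finset FareyVertex))
    (htri : ∀ x, (∃ T : FareyTriangle, T.verts = {u, w, x}) ↔ x = x₁ ∨ x = x₂) :
    {T : FareyTriangle | u ∈ T.verts ∧ w ∈ T.verts}.ncard = 2 := by
  obtain ⟨T₁, hT₁⟩ := (htri x₁).2 (.inl rfl)
  obtain ⟨T₂, hT₂⟩ := (htri x₂).2 (.inr rfl)
  have hT₁₂ : T₁ ≠ T₂ := by
    rintro rfl
    exact hx₁ (hT₂ ▸ hT₁ ▸ by simp)
  suffices {T : FareyTriangle | u ∈ T.verts ∧ w ∈ T.verts} = {T₁, T₂} by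
    rw [this, Set.ncard_pair hT₁₂]
  ext T
  constructor
  · rintro ⟨hu, hw⟩
    obtain ⟨x, hx⟩ := T.exists_verts_eq hu hw huw
    rcases (htri x).1 ⟨T, hx⟩ with rfl | rfl
    · exact .inl (FareyTriangle.ext (hx.trans hT₁.symm))
    · exact .inr (FareyTriangle.ext (hx.trans hT₂.symm))
  · rintro (rfl | rfl) <;> simp [hT₁, hT₂]

theorem farey_neighbors_in_exactly_two_triangles (u w : FareyVertex) (h : FareyNeighbor u w) :
    (∀ x : FareyVertex,
        (∃ T : FareyTriangle, T.verts = {u, w, x}) ↔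
          (x = mkFarey (fnum u + fnum w) (fden u + fden w) ∨
           x = mkFarey (fnum u - fnum w) (fden u - fden w))) ∧
    {T : FareyTriangle | u ∈ T.verts ∧ w ∈ T.verts}.ncard = 2 := by
  have htri := fun x => exists_fareyTriangle_iff.trans
    ((and_iff_right h).trans (fareyNeighbor_and_fareyNeighbor_iff (x := x) h))
  refine ⟨htri, ncard_setOf_mem_verts_eq_two h.ne ?_ htri⟩
  obtain ⟨hux₁, hwx₁⟩ := (fareyNeighbor_and_fareyNeighbor_iff h).2 (.inl rfl)
  simp [hux₁.ne.symm, hwx₁.ne.symm, mkFarey_add_ne_mkFarey_sub h]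
end
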